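/- The error in the Lagrange multiplier satisfies, in terms of the energy dual norm of the first residual, ‖p - p_N‖_Y ≤ (2/β̃)·‖r¹‖_{X',a} + (1/β̃²)·‖r²‖_{Y'}, where ‖v‖_{X,a} = √(a(v,v)) is the energy norm and ‖r¹‖_{X',a} = sup_{v ≠ 0} r¹(v)/‖v‖_{X,a}. -/

import Mathlib

/-!
Pass to the energy inner product `⟪v, w⟫ = a v w`, in which the inf-sup condition says that the
Riesz representative `z q` of `b (·) q` satisfies `β ‖q‖ ≤ ‖z q‖`. With `e = u - uN` and
`π = p - pN` the residuals are `r¹ = ⟪e, ·⟫ + b (·) π` and `r² = b e`. Split `e = e₀ + w` with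
`e₀ ∈ ker b` and `w ⊥ ker b`, so that `w = z q` for some `q`. Testing `r¹` with `e₀` gives
`‖e₀‖ ≤ ‖r¹‖`, and testing `r²` with `q` gives `‖w‖² ≤ ‖r²‖ ‖q‖ ≤ ‖r²‖ ‖w‖ / β`; hence
`‖e‖ ≤ ‖r¹‖ + ‖r²‖ / β`. Finally the inf-sup condition at `π` gives `β ‖π‖ ≤ ‖r¹‖ + ‖e‖`.
-/

open scoped RealInnerProductSpace

section RatioSup

variable {E : Type*} [NormedAddCommGroup E]

theorem iSup_div_norm_le {F : E → ℝ} {C : ℝ} (hC : 0 ≤ C) (h : ∀ v ≠ 0, F v ≤ C * ‖v‖) :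
    ⨆ v : {v : E // v ≠ 0}, F v.1 / ‖v.1‖ ≤ C :=
  Real.iSup_le (fun v => (div_le_iff₀ (norm_pos_iff.mpr v.2)).mpr (h v v.2)) hC

variable [NormedSpace ℝ E]

theorem ContinuousLinearMap.bddAbove_div_norm (ℓ : E →L[ℝ] ℝ) :
    BddAbove (Set.range fun v : {v : E // v ≠ 0} => ℓ v.1 / ‖v.1‖) := by
  refine ⟨‖ℓ‖, ?_⟩
  rintro _ ⟨v, rfl⟩
  exact (div_le_iff₀ (norm_pos_iff.mpr v.2)).mpr ((le_abs_self _).trans (ℓ.le_opNorm v))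

theorem ContinuousLinearMap.iSup_div_norm_nonneg (ℓ : E →L[ℝ] ℝ) :
    0 ≤ ⨆ v : {v : E // v ≠ 0}, ℓ v.1 / ‖v.1‖ := by
  rcases subsingleton_or_nontrivial E with hE | hE
  · have : IsEmpty {v : E // v ≠ 0} := ⟨fun v => v.2 (Subsingleton.elim _ _)⟩
    rw [Real.iSup_of_isEmpty]
  · obtain ⟨v, hv⟩ := exists_ne (0 : E)
    have hpos := le_ciSup ℓ.bddAbove_div_norm ⟨v, hv⟩
    have hneg := le_ciSup ℓ.bddAbove_div_norm ⟨-v, neg_ne_zero.mpr hv⟩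
    simp only [map_neg, norm_neg, neg_div] at hpos hneg
    linarith

theorem ContinuousLinearMap.le_iSup_div_norm_mul (ℓ : E →L[ℝ] ℝ) (v : E) :
    ℓ v ≤ (⨆ w : {w : E // w ≠ 0}, ℓ w.1 / ‖w.1‖) * ‖v‖ := by
  rcases eq_or_ne v 0 with rfl | hv
  · simp
  · exact (div_le_iff₀ (norm_pos_iff.mpr hv)).mp (le_ciSup ℓ.bddAbove_div_norm ⟨v, hv⟩)

end RatioSup

theorem LinearEquiv.iSup_ne_zero_comp {R E F : Type*} [Semiring R] [AddCommMonoid E]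
    [AddCommMonoid F] [Module R E] [Module R F] (ι : E ≃ₗ[R] F) (φ : F → ℝ) :
    ⨆ v : {v : E // v ≠ 0}, φ (ι v.1) = ⨆ w : {w : F // w ≠ 0}, φ w.1 :=
  (ι.toEquiv.subtypeEquiv fun _ => ι.map_ne_zero_iff.symm).iSup_comp
    (g := fun w : {w : F // w ≠ 0} => φ w.1)

theorem le_of_sq_le_mul {x R : ℝ} (hR : 0 ≤ R) (h : x ^ 2 ≤ R * x) : x ≤ R := by
  nlinarith

section SaddlePoint

variable {H Y : Type*} [NormedAddCommGroup H] [InnerProductSpace ℝ H]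
  [NormedAddCommGroup Y] [Module ℝ Y] (B : H →ₗ[ℝ] Y →ₗ[ℝ] ℝ)

theorem exists_linearMap_inner_eq [FiniteDimensional ℝ H] :
    ∃ z : Y →ₗ[ℝ] H, ∀ q v, ⟪z q, v⟫ = B v q :=
  ⟨{ toFun q := (InnerProductSpace.toDual ℝ H).symm (LinearMap.toContinuousLinearMap (B.flip q))
     map_add' := fun q q' => by simp
     map_smul' := fun r q => by simp },
   fun _ _ => InnerProductSpace.toDual_symm_apply⟩

variable {B}

theorem ker_eq_orthogonal_range {z : Y →ₗ[ℝ] H} (hz : ∀ q v, ⟪z q, v⟫ = B v q) :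
    LinearMap.ker B = (LinearMap.range z)ᗮ := by
  ext v
  simp only [LinearMap.mem_ker, Submodule.mem_orthogonal, LinearMap.mem_range,
    forall_exists_index, forall_apply_eq_imp_iff, hz]
  exact LinearMap.ext_iff

variable {β : ℝ} (hinfsup : ∀ q : Y, β * ‖q‖ ≤ ⨆ v : {v : H // v ≠ 0}, B v.1 q / ‖v.1‖)
include hinfsup

theorem mul_norm_le_norm_of_inner_eq {z : Y →ₗ[ℝ] H} (hz : ∀ q v, ⟪z q, v⟫ = B v q) (q : Y) :
    β * ‖q‖ ≤ ‖z q‖ :=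
  (hinfsup q).trans <| iSup_div_norm_le (norm_nonneg _) fun v _ => hz q v ▸ real_inner_le_norm _ _

variable {e : H} {π : Y} {R₁ R₂ : ℝ} (hR₁ : 0 ≤ R₁)
  (hr₁ : ∀ v, ⟪e, v⟫ + B v π ≤ R₁ * ‖v‖)
include hR₁ hr₁

theorem mul_norm_le_of_residual_le : β * ‖π‖ ≤ R₁ + ‖e‖ :=
  (hinfsup π).trans <|
    iSup_div_norm_le (F := (B · π)) (add_nonneg hR₁ (norm_nonneg e)) fun v _ => by
      have := neg_le_of_abs_le (abs_real_inner_le_norm e v)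
      linarith [hr₁ v]

omit hinfsup in
theorem norm_le_of_mem_ker_of_residual_le {e₀ : H} (he₀ : e₀ ∈ LinearMap.ker B)
    (horth : ⟪e - e₀, e₀⟫ = 0) : ‖e₀‖ ≤ R₁ := by
  have hsq : ‖e₀‖ ^ 2 ≤ R₁ * ‖e₀‖ := by
    have h := hr₁ e₀
    rw [inner_sub_left, real_inner_self_eq_norm_sq, sub_eq_zero] at horth
    rwa [LinearMap.mem_ker.mp he₀, LinearMap.zero_apply, add_zero, horth] at h
  exact le_of_sq_le_mul hR₁ hsq

variable [FiniteDimensional ℝ H] (hβ : 0 < β) (hR₂ : 0 ≤ R₂) (hr₂ : ∀ q, B e q ≤ R₂ * ‖q‖)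
include hβ hR₂ hr₂

theorem norm_le_of_residuals_le : ‖e‖ ≤ R₁ + R₂ / β := by
  obtain ⟨z, hz⟩ := exists_linearMap_inner_eq B
  obtain ⟨e₀, he₀, w, hw, rfl⟩ := (LinearMap.ker B).exists_add_mem_mem_orthogonal e
  have hwe₀ : ⟪w, e₀⟫ = 0 := Submodule.inner_left_of_mem_orthogonal he₀ hw
  have hker : ‖e₀‖ ≤ R₁ :=
    norm_le_of_mem_ker_of_residual_le hR₁ hr₁ he₀ (by rwa [add_sub_cancel_left])
  have hperp : ‖w‖ ≤ R₂ / β := by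
    obtain ⟨q, rfl⟩ : w ∈ LinearMap.range z := by
      rwa [← (LinearMap.range z).orthogonal_orthogonal, ← ker_eq_orthogonal_range hz]
    have hsq : ‖z q‖ ^ 2 ≤ R₂ * ‖q‖ := by
      rw [← real_inner_self_eq_norm_sq, ← zero_add ⟪z q, z q⟫, ← hwe₀, ← inner_add_right, hz]
      exact hr₂ q
    have hq := mul_norm_le_norm_of_inner_eq hinfsup hz q
    have hsq' : (‖z q‖ * β) ^ 2 ≤ R₂ * (‖z q‖ * β) := by
      nlinarith [mul_le_mul_of_nonneg_left hq (mul_nonneg hR₂ hβ.le),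
        mul_le_mul_of_nonneg_left hsq (sq_nonneg β)]
    rw [le_div_iff₀ hβ]
    exact le_of_sq_le_mul hR₂ hsq'
  calc ‖e₀ + w‖ ≤ ‖e₀‖ + ‖w‖ := norm_add_le _ _
    _ ≤ R₁ + R₂ / β := add_le_add hker hperp

theorem norm_multiplier_le_of_residuals_le : ‖π‖ ≤ 2 / β * R₁ + 1 / β ^ 2 * R₂ := by
  have hπ := mul_norm_le_of_residual_le hinfsup hR₁ hr₁
  have he := norm_le_of_residuals_le hinfsup hR₁ hr₁ hβ hR₂ hr₂
  calc ‖π‖ ≤ (2 * R₁ + R₂ / β) / β := by rw [le_div_iff₀ hβ]; linarith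
    _ = 2 / β * R₁ + 1 / β ^ 2 * R₂ := by field_simp

end SaddlePoint

def EnergySpace {X : Type*} [AddCommGroup X] [Module ℝ X] (_ : X →ₗ[ℝ] X →ₗ[ℝ] ℝ) : Type _ := X

namespace EnergySpace

variable {X : Type*} [AddCommGroup X] [Module ℝ X] (a : X →ₗ[ℝ] X →ₗ[ℝ] ℝ)

instance : AddCommGroup (EnergySpace a) := inferInstanceAs (AddCommGroup X)

instance : Module ℝ (EnergySpace a) := inferInstanceAs (Module ℝ X)

instance [FiniteDimensional ℝ X] : FiniteDimensional ℝ (EnergySpace a) :=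
  inferInstanceAs (FiniteDimensional ℝ X)

def equiv : X ≃ₗ[ℝ] EnergySpace a := LinearEquiv.refl ℝ X

variable {a} (ha_symm : ∀ w v, a w v = a v w) (ha_pos : ∀ v ≠ 0, 0 < a v v)

abbrev core : InnerProductSpace.Core ℝ (EnergySpace a) where
  inner x y := a ((equiv a).symm x) ((equiv a).symm y)
  conj_inner_symm x y := ha_symm _ _
  re_inner_nonneg x := by
    rcases eq_or_ne ((equiv a).symm x) 0 with hx | hx
    · simp [hx]
    · exact (ha_pos _ hx).le
  add_left x y z := by simp
  smul_left x y r := by simp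
  definite x hx := by
    by_contra h
    exact (ha_pos _ ((equiv a).symm.map_ne_zero_iff.mpr h)).ne' hx

noncomputable abbrev normedAddCommGroup : NormedAddCommGroup (EnergySpace a) :=
  (core ha_symm ha_pos).toNormedAddCommGroup

noncomputable abbrev innerProductSpace :
    @InnerProductSpace ℝ (EnergySpace a) _
      (normedAddCommGroup ha_symm ha_pos).toSeminormedAddCommGroup :=
  InnerProductSpace.ofCore (core ha_symm ha_pos).toCore

end EnergySpace

theorem norm_multiplier_le_of_energy_residuals {X Y : Type*} [AddCommGroup X] [Module ℝ X]
    [FiniteDimensional ℝ X] [NormedAddCommGroup Y] [NormedSpace ℝ Y] [FiniteDimensional ℝ Y]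
    {a : X →ₗ[ℝ] X →ₗ[ℝ] ℝ} (ha_symm : ∀ w v, a w v = a v w) (ha_pos : ∀ v ≠ 0, 0 < a v v)
    {b : X →ₗ[ℝ] Y →ₗ[ℝ] ℝ} {β : ℝ} (hβ : 0 < β)
    (hinfsup : ∀ q : Y, β * ‖q‖ ≤ ⨆ v : {v : X // v ≠ 0}, b v.1 q / Real.sqrt (a v.1 v.1))
    {e : X} {π : Y} {r₁ : X →ₗ[ℝ] ℝ} {r₂ : Y →ₗ[ℝ] ℝ}
    (hr₁ : ∀ v, r₁ v = a e v + b v π) (hr₂ : ∀ q, r₂ q = b e q) :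
    ‖π‖ ≤ 2 / β * (⨆ v : {v : X // v ≠ 0}, r₁ v.1 / Real.sqrt (a v.1 v.1))
      + 1 / β ^ 2 * (⨆ q : {q : Y // q ≠ 0}, r₂ q.1 / ‖q.1‖) := by
  let := EnergySpace.normedAddCommGroup ha_symm ha_pos
  let := EnergySpace.innerProductSpace ha_symm ha_pos
  let ι := EnergySpace.equiv a
  have hinner (v : X) (w : EnergySpace a) : ⟪ι v, w⟫ = a v (ι.symm w) := rfl
  have hnorm (v : X) : ‖ι v‖ = Real.sqrt (a v v) := norm_eq_sqrt_real_inner (ι v)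
  have henergy (φ : X → ℝ) : ⨆ v : {v : X // v ≠ 0}, φ v.1 / Real.sqrt (a v.1 v.1) =
      ⨆ w : {w : EnergySpace a // w ≠ 0}, φ (ι.symm w.1) / ‖w.1‖ := by
    rw [← ι.iSup_ne_zero_comp (fun w => φ (ι.symm w) / ‖w‖)]
    simp only [LinearEquiv.symm_apply_apply, hnorm]
  let ℓ₁ := LinearMap.toContinuousLinearMap (r₁ ∘ₗ ι.symm.toLinearMap)
  let ℓ₂ := LinearMap.toContinuousLinearMap r₂
  rw [henergy]
  refine norm_multiplier_le_of_residuals_le (B := b ∘ₗ ι.symm.toLinearMap) (e := ι e)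
    (fun q => (hinfsup q).trans_eq (henergy (b · q))) ℓ₁.iSup_div_norm_nonneg (fun w => ?_) hβ
    ℓ₂.iSup_div_norm_nonneg (fun q => ?_)
  · have := ℓ₁.le_iSup_div_norm_mul w
    simpa [ℓ₁, hr₁, hinner] using this
  · have := ℓ₂.le_iSup_div_norm_mul q
    simpa [ℓ₂, hr₂] using this

theorem stmt15_general
  {X Y : Type*} [NormedAddCommGroup X] [InnerProductSpace ℝ X] [FiniteDimensional ℝ X]
  [NormedAddCommGroup Y] [InnerProductSpace ℝ Y] [FiniteDimensional ℝ Y]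
  (a : X →ₗ[ℝ] X →ₗ[ℝ] ℝ) (b : X →ₗ[ℝ] Y →ₗ[ℝ] ℝ)
  (ha_symm : ∀ w v : X, a w v = a v w)
  (αa : ℝ) (hαa : 0 < αa)
  (ha_coer : ∀ v : X, αa * ‖v‖ ^ 2 ≤ a v v)
  (βt : ℝ) (hβt : 0 < βt)
  (hinfsup_a : ∀ q : Y, βt * ‖q‖ ≤ ⨆ v : {v : X // v ≠ 0}, b v.1 q / Real.sqrt (a v.1 v.1))
  (f : X →ₗ[ℝ] ℝ) (g : Y →ₗ[ℝ] ℝ)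
  (u : X) (p : Y)
  (htruth1 : ∀ v : X, a u v + b v p = f v)
  (htruth2 : ∀ q : Y, b u q = g q)
  (uN : X) (pN : Y)
:
    ‖p - pN‖ ≤ (2 / βt) * (⨆ v : {v : X // v ≠ 0}, (f v.1 - a uN v.1 - b v.1 pN) / Real.sqrt (a v.1 v.1)) + (1 / βt ^ 2) * (⨆ q : {q : Y // q ≠ 0}, (g q.1 - b uN q.1) / ‖q.1‖) := by
  have ha_pos (v : X) (hv : v ≠ 0) : 0 < a v v :=
    (mul_pos hαa (pow_pos (norm_pos_iff.mpr hv) 2)).trans_le (ha_coer v)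
  refine norm_multiplier_le_of_energy_residuals ha_symm ha_pos hβt hinfsup_a
    (r₁ := f - a uN - b.flip pN) (r₂ := g - b uN) (e := u - uN) (fun v => ?_) (fun q => ?_)
  · simp only [LinearMap.sub_apply, LinearMap.flip_apply, map_sub, ← htruth1 v]
    ring
  · simp only [LinearMap.sub_apply, map_sub, htruth2]

theorem stmt15
  {X Y : Type*} [NormedAddCommGroup X] [InnerProductSpace ℝ X] [FiniteDimensional ℝ X]
  [NormedAddCommGroup Y] [InnerProductSpace ℝ Y] [FiniteDimensional ℝ Y]
  (a : X →ₗ[ℝ] X →ₗ[ℝ] ℝ) (b : X →ₗ[ℝ] Y →ₗ[ℝ] ℝ)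
  (ha_symm : ∀ w v : X, a w v = a v w)
  (αa γa : ℝ) (hαa : 0 < αa) (hγa : 0 < γa)
  (ha_coer : ∀ v : X, αa * ‖v‖ ^ 2 ≤ a v v)
  (ha_cont : ∀ w v : X, a w v ≤ γa * ‖w‖ * ‖v‖)
  (βt : ℝ) (hβt : 0 < βt)
  (hinfsup_a : ∀ q : Y, βt * ‖q‖ ≤ ⨆ v : {v : X // v ≠ 0}, b v.1 q / Real.sqrt (a v.1 v.1))
  (f : X →ₗ[ℝ] ℝ) (g : Y →ₗ[ℝ] ℝ)
  (u : X) (p : Y)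
  (htruth1 : ∀ v : X, a u v + b v p = f v)
  (htruth2 : ∀ q : Y, b u q = g q)
  (XN : Submodule ℝ X) (YN : Submodule ℝ Y)
  (uN : X) (pN : Y) (huN : uN ∈ XN) (hpN : pN ∈ YN)
  (hrb1 : ∀ v ∈ XN, a uN v + b v pN = f v)
  (hrb2 : ∀ q ∈ YN, b uN q = g q)
:
    ‖p - pN‖ ≤ (2 / βt) * (⨆ v : {v : X // v ≠ 0}, (f v.1 - a uN v.1 - b v.1 pN) / Real.sqrt (a v.1 v.1)) + (1 / βt ^ 2) * (⨆ q : {q : Y // q ≠ 0}, (g q.1 - b uN q.1) / ‖q.1‖) :=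
  stmt15_general a b ha_symm αa hαa ha_coer βt hβt hinfsup_a f g u p htruth1 htruth2 uN pN
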